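/- arXiv:0902.2125 — 2 statements merged into one kernel-verified Lean document; each statement's English description precedes it below -/
import Mathlib

section
/- Let θ be a formula of L such that there exists a CMAEHS for θ. Then θ is satisfiable in a pseudo-CMAEM. -/
open Classical

/-- A coalition: a nonempty set of agents. -/
abbrev Coalition (Agent : Type) := {A : Set Agent // A.Nonempty}

/-- The singleton coalition `{a}`. -/
def single {Agent : Type} (a : Agent) : Coalition Agent :=
  ⟨{a}, Set.singleton_nonempty a⟩

/-- Formulas of the language `L`:
`φ ::= p | ¬φ | φ₁ ∧ φ₂ | D_A φ | C_A φ` with `A` a nonempty coalition. -/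
inductive Formula (Agent AP : Type) : Type
  | atom : AP → Formula Agent AP
  | neg  : Formula Agent AP → Formula Agent AP
  | and  : Formula Agent AP → Formula Agent AP → Formula Agent AP
  | D    : Coalition Agent → Formula Agent AP → Formula Agent AP
  | C    : Coalition Agent → Formula Agent AP → Formula Agent AP

/-- A coalitional multiagent epistemic structure (CMAES): a nonempty set of
states with relations `R^D_A` and `R^C_A` for every nonempty coalition `A`,
where `R^C_A` is the reflexive transitive closure of the union of the
relations `R^D_{A'}` over all nonempty `A' ⊆ A`. -/
structure CMAES (Agent : Type) where
  State : Type
  state_nonempty : Nonempty State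
  RD : Coalition Agent → State → State → Prop
  RC : Coalition Agent → State → State → Prop
  RC_eq : ∀ A : Coalition Agent, RC A =
    Relation.ReflTransGen (fun s t => ∃ A' : Coalition Agent, A'.1 ⊆ A.1 ∧ RD A' s t)

/-- A pseudo-CMAEF: every `R^D_A` is an equivalence relation and
`R^D_A ⊆ R^D_B` whenever `∅ ≠ B ⊆ A`. -/
def CMAES.IsPseudoFrame {Agent : Type} (G : CMAES Agent) : Prop :=
  (∀ A : Coalition Agent, Equivalence (G.RD A)) ∧
  (∀ A B : Coalition Agent, B.1 ⊆ A.1 → ∀ s t, G.RD A s t → G.RD B s t)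

/-- A (genuine) CMAEF: every `R^D_A` is an equivalence relation and
`R^D_A = ⋂_{a ∈ A} R^D_{{a}}`. -/
def CMAES.IsFrame {Agent : Type} (G : CMAES Agent) : Prop :=
  (∀ A : Coalition Agent, Equivalence (G.RD A)) ∧
  (∀ (A : Coalition Agent) (s t : G.State), G.RD A s t ↔ ∀ a ∈ A.1, G.RD (single a) s t)

/-- A CMAES equipped with a labeling of states by sets of atomic propositions. -/
structure CMAEModel (Agent AP : Type) extends CMAES Agent where
  label : State → Set AP

/-- The satisfaction relation. -/
def CMAEModel.Sat {Agent AP : Type} (M : CMAEModel Agent AP) :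
    Formula Agent AP → M.State → Prop
  | .atom p, s => p ∈ M.label s
  | .neg φ, s => ¬ M.Sat φ s
  | .and φ ψ, s => M.Sat φ s ∧ M.Sat ψ s
  | .D A φ, s => ∀ t, M.RD A s t → M.Sat φ t
  | .C A φ, s => ∀ t, M.RC A s t → M.Sat φ t

/-- `M` is a pseudo-CMAEM. -/
def CMAEModel.IsPseudo {Agent AP : Type} (M : CMAEModel Agent AP) : Prop :=
  M.toCMAES.IsPseudoFrame

/-- `M` is a (genuine) CMAEM. -/
def CMAEModel.IsGenuine {Agent AP : Type} (M : CMAEModel Agent AP) : Prop :=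
  M.toCMAES.IsFrame

/-- `θ` is satisfiable in a pseudo-CMAEM. -/
def SatisfiableInPseudo (Agent AP : Type) (θ : Formula Agent AP) : Prop :=
  ∃ M : CMAEModel Agent AP, M.IsPseudo ∧ ∃ s : M.State, M.Sat θ s

/-- `θ` is satisfiable in a CMAEM. -/
def SatisfiableInCMAEM (Agent AP : Type) (θ : Formula Agent AP) : Prop :=
  ∃ M : CMAEModel Agent AP, M.IsGenuine ∧ ∃ s : M.State, M.Sat θ s
/-- A set of formulas is fully expanded. -/
def FullyExpanded {Agent AP : Type} (Δ : Set (Formula Agent AP)) : Prop :=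
  (∀ φ, Formula.neg (Formula.neg φ) ∈ Δ → φ ∈ Δ) ∧
  (∀ φ ψ, Formula.and φ ψ ∈ Δ → φ ∈ Δ ∧ ψ ∈ Δ) ∧
  (∀ φ ψ, Formula.neg (Formula.and φ ψ) ∈ Δ → Formula.neg φ ∈ Δ ∨ Formula.neg ψ ∈ Δ) ∧
  (∀ (A A' : Coalition Agent) (φ : Formula Agent AP),
      Formula.D A φ ∈ Δ → A.1 ⊆ A'.1 → Formula.D A' φ ∈ Δ) ∧
  (∀ (A : Coalition Agent) (φ : Formula Agent AP), Formula.D A φ ∈ Δ → φ ∈ Δ) ∧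
  (∀ (A : Coalition Agent) (φ : Formula Agent AP), Formula.C A φ ∈ Δ →
      ∀ a ∈ A.1, Formula.D (single a) (Formula.and φ (Formula.C A φ)) ∈ Δ) ∧
  (∀ (A : Coalition Agent) (φ : Formula Agent AP), Formula.neg (Formula.C A φ) ∈ Δ →
      ∃ a ∈ A.1, Formula.neg (Formula.D (single a) (Formula.and φ (Formula.C A φ))) ∈ Δ) ∧
  (∀ (A B : Coalition Agent) (φ : Formula Agent AP) (h : (A.1 ∩ B.1).Nonempty),
      Formula.neg (Formula.D A (Formula.neg (Formula.D B φ))) ∈ Δ →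
      Formula.D ⟨A.1 ∩ B.1, h⟩ φ ∈ Δ)

/-- `H` is a Hintikka labeling of the CMAES `G`, i.e. `(G, H)` is a CMAEHS:
conditions (H1)-(H5). -/
def IsHintikka {Agent AP : Type} (G : CMAES Agent)
    (H : G.State → Set (Formula Agent AP)) : Prop :=
  (∀ s φ, Formula.neg φ ∈ H s → φ ∉ H s) ∧
  (∀ s, FullyExpanded (H s)) ∧
  (∀ s (A : Coalition Agent) φ, Formula.neg (Formula.D A φ) ∈ H s →
      ∃ t, G.RD A s t ∧ Formula.neg φ ∈ H t) ∧
  (∀ s t (A : Coalition Agent), G.RD A s t →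
      ∀ A' : Coalition Agent, A'.1 ⊆ A.1 →
      ∀ φ, (Formula.D A' φ ∈ H s ↔ Formula.D A' φ ∈ H t)) ∧
  (∀ s (A : Coalition Agent) φ, Formula.neg (Formula.C A φ) ∈ H s →
      ∃ t, G.RC A s t ∧ Formula.neg φ ∈ H t)

/-- There exists a coalitional multiagent epistemic Hintikka structure for `θ`. -/
def ExistsHintikkaFor (Agent AP : Type) (θ : Formula Agent AP) : Prop :=
  ∃ (G : CMAES Agent) (H : G.State → Set (Formula Agent AP)),
    IsHintikka G H ∧ ∃ s : G.State, θ ∈ H s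

/-!
Replace each `R^D_A` by the equivalence closure of the union of the `R^D_{A'}` over all
`A' ⊇ A`, and label a state by the atoms of its Hintikka set. This is a pseudo-CMAEF by
construction. By (H4), `D_B`-formulas with `B ⊆ A` are invariant along the new `R^D_A`,
so `C_A φ` propagates along the new `R^C_A` through `C_A φ → D_{a}(φ ∧ C_A φ)`. A truth
lemma by induction on formulas then shows that every formula of a Hintikka set holds at
its state and every negated one fails there; (H3) and (H5) provide the witnesses, since
the old relations are contained in the new ones.
-/

namespace CMAES

variable {Agent : Type} (G : CMAES Agent)

def pseudoRD (A : Coalition Agent) : G.State → G.State → Prop :=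
  Relation.EqvGen fun s t => ∃ A' : Coalition Agent, A.1 ⊆ A'.1 ∧ G.RD A' s t

def pseudoClosure : CMAES Agent where
  State := G.State
  state_nonempty := G.state_nonempty
  RD := G.pseudoRD
  RC A := Relation.ReflTransGen fun s t => ∃ A' : Coalition Agent, A'.1 ⊆ A.1 ∧ G.pseudoRD A' s t
  RC_eq _ := rfl

variable {G}

theorem pseudoRD_of_RD {A : Coalition Agent} {s t : G.State} (h : G.RD A s t) :
    G.pseudoRD A s t :=
  .rel _ _ ⟨A, subset_rfl, h⟩

theorem pseudoClosure_RC_of_RC {A : Coalition Agent} {s t : G.State} (h : G.RC A s t) :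
    G.pseudoClosure.RC A s t := by
  rw [G.RC_eq] at h
  exact Relation.ReflTransGen.mono (fun _ _ ⟨A', hA', hRD⟩ => ⟨A', hA', pseudoRD_of_RD hRD⟩) _ _ h

theorem pseudoClosure_isPseudoFrame : G.pseudoClosure.IsPseudoFrame :=
  ⟨fun _ => Relation.EqvGen.is_equivalence _, fun _ _ hBA _ _ hst =>
    hst.mono fun _ _ ⟨A', hAA', hRD⟩ => ⟨A', hBA.trans hAA', hRD⟩⟩

end CMAES

def pseudoModel {Agent AP : Type} (G : CMAES Agent) (H : G.State → Set (Formula Agent AP)) :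
    CMAEModel Agent AP :=
  ⟨G.pseudoClosure, fun s => {p | Formula.atom p ∈ H s}⟩

namespace FullyExpanded

variable {Agent AP : Type} {Δ : Set (Formula Agent AP)} (hΔ : FullyExpanded Δ)
include hΔ

theorem mem_of_mem_neg_neg {φ : Formula Agent AP} (h : φ.neg.neg ∈ Δ) : φ ∈ Δ :=
  hΔ.1 φ h

theorem mem_of_and_mem {φ ψ : Formula Agent AP} (h : φ.and ψ ∈ Δ) : φ ∈ Δ ∧ ψ ∈ Δ :=
  hΔ.2.1 φ ψ h

theorem neg_mem_or_neg_mem {φ ψ : Formula Agent AP} (h : (φ.and ψ).neg ∈ Δ) :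
    φ.neg ∈ Δ ∨ ψ.neg ∈ Δ :=
  hΔ.2.2.1 φ ψ h

theorem mem_of_D_mem {A : Coalition Agent} {φ : Formula Agent AP} (h : φ.D A ∈ Δ) : φ ∈ Δ :=
  hΔ.2.2.2.2.1 A φ h

theorem D_single_mem_of_C_mem {A : Coalition Agent} {φ : Formula Agent AP} (h : φ.C A ∈ Δ)
    {a : Agent} (ha : a ∈ A.1) : (φ.and (φ.C A)).D (single a) ∈ Δ :=
  hΔ.2.2.2.2.2.1 A φ h a ha

theorem mem_of_C_mem {A : Coalition Agent} {φ : Formula Agent AP} (h : φ.C A ∈ Δ) : φ ∈ Δ :=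
  let ⟨_, ha⟩ := A.2
  (hΔ.mem_of_and_mem (hΔ.mem_of_D_mem (hΔ.D_single_mem_of_C_mem h ha))).1

end FullyExpanded

namespace IsHintikka

variable {Agent AP : Type} {G : CMAES Agent} {H : G.State → Set (Formula Agent AP)}
  (hH : IsHintikka G H)
include hH

theorem D_mem_iff_of_pseudoRD {A : Coalition Agent} {s t : G.State} (hst : G.pseudoRD A s t)
    {B : Coalition Agent} (hB : B.1 ⊆ A.1) (φ : Formula Agent AP) :
    φ.D B ∈ H s ↔ φ.D B ∈ H t := by
  induction hst with
  | rel u v huv =>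
    obtain ⟨A', hAA', hRD⟩ := huv
    exact hH.2.2.2.1 u v A' hRD B (hB.trans hAA') φ
  | refl => rfl
  | symm _ _ _ ih => exact ih.symm
  | trans _ _ _ _ _ ih₁ ih₂ => exact ih₁.trans ih₂

theorem C_mem_of_pseudoClosure_RC {A : Coalition Agent} {φ : Formula Agent AP}
    {s t : G.State} (hst : G.pseudoClosure.RC A s t) (hC : φ.C A ∈ H s) : φ.C A ∈ H t := by
  induction hst with
  | refl => exact hC
  | tail _ hedge ih =>
    obtain ⟨A', hA'A, hRD⟩ := hedge
    obtain ⟨a, ha⟩ := A'.2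
    have hD := (hH.2.1 _).D_single_mem_of_C_mem ih (hA'A ha)
    have hsingle : (single a).1 ⊆ A'.1 := Set.singleton_subset_iff.mpr ha
    rw [hH.D_mem_iff_of_pseudoRD hRD hsingle] at hD
    exact ((hH.2.1 _).mem_of_and_mem ((hH.2.1 _).mem_of_D_mem hD)).2

theorem truth (φ : Formula Agent AP) (s : G.State) :
    (φ ∈ H s → (pseudoModel G H).Sat φ s) ∧
      (φ.neg ∈ H s → ¬ (pseudoModel G H).Sat φ s) := by
  induction φ generalizing s with
  | atom p => exact ⟨id, fun hn hp => hH.1 s _ hn hp⟩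
  | neg φ ih =>
    exact ⟨(ih s).2, fun hnn hn => hn ((ih s).1 ((hH.2.1 s).mem_of_mem_neg_neg hnn))⟩
  | and φ ψ ihφ ihψ =>
    refine ⟨fun h => ?_, fun hn h => ?_⟩
    · obtain ⟨hφ, hψ⟩ := (hH.2.1 s).mem_of_and_mem h
      exact ⟨(ihφ s).1 hφ, (ihψ s).1 hψ⟩
    · rcases (hH.2.1 s).neg_mem_or_neg_mem hn with hnφ | hnψ
      · exact (ihφ s).2 hnφ h.1
      · exact (ihψ s).2 hnψ h.2
  | D A φ ih =>
    refine ⟨fun hD t hst => ?_, fun hn hD => ?_⟩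
    · rw [hH.D_mem_iff_of_pseudoRD hst subset_rfl] at hD
      exact (ih t).1 ((hH.2.1 t).mem_of_D_mem hD)
    · obtain ⟨t, hRD, hnφ⟩ := hH.2.2.1 s A φ hn
      exact (ih t).2 hnφ (hD t (CMAES.pseudoRD_of_RD hRD))
  | C A φ ih =>
    refine ⟨fun hC t hst => ?_, fun hn hC => ?_⟩
    · exact (ih t).1 ((hH.2.1 t).mem_of_C_mem (hH.C_mem_of_pseudoClosure_RC hst hC))
    · obtain ⟨t, hRC, hnφ⟩ := hH.2.2.2.2 s A φ hn
      exact (ih t).2 hnφ (hC t (CMAES.pseudoClosure_RC_of_RC hRC))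

end IsHintikka

theorem hintikka_to_pseudo_general {Agent AP : Type}
    (θ : Formula Agent AP) (h : ExistsHintikkaFor Agent AP θ) :
    SatisfiableInPseudo Agent AP θ := by
  obtain ⟨G, H, hH, s, hθ⟩ := h
  exact ⟨pseudoModel G H, CMAES.pseudoClosure_isPseudoFrame, s, (hH.truth θ s).1 hθ⟩

/-- If there exists a CMAEHS for `θ`, then `θ` is satisfiable
in a pseudo-CMAEM. -/
theorem hintikka_to_pseudo {Agent AP : Type} [Fintype Agent] [Nonempty Agent]
    (θ : Formula Agent AP) (h : ExistsHintikkaFor Agent AP θ) :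
    SatisfiableInPseudo Agent AP θ :=
  hintikka_to_pseudo_general θ h
end

section
/- A formula θ of L is satisfiable in a CMAEM if and only if it is satisfiable in a pseudo-CMAEM. -/
open Classical

/-! Unravelling a pseudo-CMAEM `M` into a tree of histories gives a genuine CMAEM. A history
records a path `s₀ →_{B₁} s₁ →_{B₂} ⋯ →_{Bₙ} sₙ` of `R^D`-steps of `M`, and two histories are
`D_A`-related in the tree when, for each `a ∈ A`, climbing back along the edges whose label
contains `a` reaches the same history. This relation is by construction the intersection of
the per-agent ones. Conversely, if two histories are `D_A`-related then climbing back along the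
edges whose label contains all of `A` brings both to one common history, and since every such
edge is an `R^D_A`-step of `M` in a pseudo-CMAEM, their last states are `R^D_A`-related. Hence
the map "last state" preserves truth of all formulas. -/

inductive Hist (Agent σ : Type) : Type
  | base : σ → Hist Agent σ
  | step : Hist Agent σ → Coalition Agent → σ → Hist Agent σ

namespace Hist

variable {Agent σ : Type}

def last : Hist Agent σ → σ
  | base s => s
  | step _ _ t => t

def depth : Hist Agent σ → ℕ
  | base _ => 0
  | step h _ _ => h.depth + 1

noncomputable def climb (p : Coalition Agent → Prop) : Hist Agent σ → Hist Agent σ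
  | base s => base s
  | step h B t => if p B then climb p h else step h B t

section Climb

variable {p q : Coalition Agent → Prop}

@[simp] lemma climb_base (s : σ) : climb p (base s : Hist Agent σ) = base s := rfl

@[simp] lemma climb_step_of_pos {B : Coalition Agent} (h : Hist Agent σ) (t : σ) (hB : p B) :
    climb p (step h B t) = climb p h := if_pos hB

@[simp] lemma climb_step_of_neg {B : Coalition Agent} (h : Hist Agent σ) (t : σ) (hB : ¬ p B) :
    climb p (step h B t) = step h B t := if_neg hB

lemma depth_climb_le (h : Hist Agent σ) : (climb p h).depth ≤ h.depth := by
  induction h with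
  | base s => rfl
  | step g B t ih =>
    by_cases hB : p B
    · rw [climb_step_of_pos g t hB, depth]; omega
    · rw [climb_step_of_neg g t hB]

lemma climb_eq_self_of_depth_le {h : Hist Agent σ} (hd : h.depth ≤ (climb p h).depth) :
    climb p h = h := by
  cases h with
  | base s => rfl
  | step g B t =>
    by_cases hB : p B
    · rw [climb_step_of_pos g t hB] at hd ⊢
      have := depth_climb_le (p := p) g
      rw [depth] at hd; omega
    · exact climb_step_of_neg g t hB

lemma climb_climb_of_imp (hpq : ∀ B, p B → q B) (h : Hist Agent σ) :
    climb q (climb p h) = climb q h := by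
  induction h with
  | base s => rfl
  | step g B t ih =>
    by_cases hB : p B
    · rw [climb_step_of_pos g t hB, climb_step_of_pos g t (hpq B hB), ih]
    · rw [climb_step_of_neg g t hB]

/-- Two histories fixed by climbs `p` and `q` respectively, on which both climbs agree, are
equal: each is an ancestor of the other. -/
lemma eq_of_climb_eq {u u' : Hist Agent σ} (hu : climb p u = u) (hu' : climb q u' = u')
    (hp : climb p u = climb p u') (hq : climb q u = climb q u') : u = u' := by
  have h₁ : u.depth ≤ u'.depth := hu ▸ hp ▸ depth_climb_le u'
  have h₂ : u'.depth ≤ u.depth := hu' ▸ hq.symm ▸ depth_climb_le u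
  have hfix : climb p u' = u' := climb_eq_self_of_depth_le (by rw [← hp, hu]; exact h₂)
  rw [← hu, hp, hfix]

end Climb

noncomputable abbrev agentTop (a : Agent) : Hist Agent σ → Hist Agent σ :=
  climb fun B => a ∈ B.1

noncomputable abbrev coalitionTop (A : Coalition Agent) : Hist Agent σ → Hist Agent σ :=
  climb fun B => A.1 ⊆ B.1

@[simp] lemma agentTop_step_of_mem {a : Agent} {B : Coalition Agent} (h : Hist Agent σ) (t : σ)
    (ha : a ∈ B.1) : agentTop a (step h B t) = agentTop a h :=
  climb_step_of_pos h t ha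

@[simp] lemma agentTop_step_of_not_mem {a : Agent} {B : Coalition Agent} (h : Hist Agent σ)
    (t : σ) (ha : a ∉ B.1) : agentTop a (step h B t) = step h B t :=
  climb_step_of_neg h t ha

@[simp] lemma coalitionTop_step_of_subset {A B : Coalition Agent} (h : Hist Agent σ) (t : σ)
    (hAB : A.1 ⊆ B.1) : coalitionTop A (step h B t) = coalitionTop A h :=
  climb_step_of_pos h t hAB

@[simp] lemma coalitionTop_step_of_not_subset {A B : Coalition Agent} (h : Hist Agent σ)
    (t : σ) (hAB : ¬ A.1 ⊆ B.1) : coalitionTop A (step h B t) = step h B t :=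
  climb_step_of_neg h t hAB

lemma agentTop_coalitionTop {a : Agent} {A : Coalition Agent} (ha : a ∈ A.1)
    (h : Hist Agent σ) : agentTop a (coalitionTop A h) = agentTop a h :=
  climb_climb_of_imp (fun _ hB => hB ha) h

lemma exists_agentTop_coalitionTop_eq (A : Coalition Agent) (h : Hist Agent σ) :
    ∃ a ∈ A.1, agentTop a (coalitionTop A h) = coalitionTop A h := by
  induction h with
  | base s => exact A.2.imp fun a ha => ⟨ha, rfl⟩
  | step g B t ih =>
    by_cases hAB : A.1 ⊆ B.1
    · rwa [coalitionTop_step_of_subset g t hAB]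
    · obtain ⟨a, ha, haB⟩ := Set.not_subset.mp hAB
      refine ⟨a, ha, ?_⟩
      rw [coalitionTop_step_of_not_subset g t hAB, agentTop_step_of_not_mem g t haB]

lemma coalitionTop_eq_of_agentTop_eq {A : Coalition Agent} {h h' : Hist Agent σ}
    (hanc : ∀ a ∈ A.1, agentTop a h = agentTop a h') : coalitionTop A h = coalitionTop A h' := by
  obtain ⟨a, ha, hfix⟩ := exists_agentTop_coalitionTop_eq A h
  obtain ⟨a', ha', hfix'⟩ := exists_agentTop_coalitionTop_eq A h'
  refine eq_of_climb_eq hfix hfix' ?_ ?_ <;>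
    simp only [agentTop_coalitionTop ha, agentTop_coalitionTop ha', hanc _ ha, hanc _ ha']

end Hist

namespace CMAES

variable {Agent : Type} (G : CMAES Agent)

def IsPath : Hist Agent G.State → Prop
  | .base _ => True
  | .step h A t => IsPath h ∧ G.RD A h.last t

variable {G}

lemma IsFrame.isPseudoFrame (hG : G.IsFrame) : G.IsPseudoFrame :=
  ⟨hG.1, fun A B hBA s t hst => (hG.2 B s t).mpr fun a ha => (hG.2 A s t).mp hst a (hBA ha)⟩

lemma IsPseudoFrame.rd_last_coalitionTop (hG : G.IsPseudoFrame) (A : Coalition Agent)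
    {h : Hist Agent G.State} (hh : G.IsPath h) : G.RD A (h.coalitionTop A).last h.last := by
  induction h with
  | base s => exact (hG.1 A).refl _
  | step g B t ih =>
    by_cases hAB : A.1 ⊆ B.1
    · rw [Hist.coalitionTop_step_of_subset g t hAB]
      exact (hG.1 A).trans (ih hh.1) (hG.2 B A hAB _ _ hh.2)
    · rw [Hist.coalitionTop_step_of_not_subset g t hAB]
      exact (hG.1 A).refl _

lemma IsPseudoFrame.rd_last_of_agentTop_eq (hG : G.IsPseudoFrame) {A : Coalition Agent}
    {h h' : Hist Agent G.State} (hh : G.IsPath h) (hh' : G.IsPath h')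
    (hanc : ∀ a ∈ A.1, h.agentTop a = h'.agentTop a) : G.RD A h.last h'.last := by
  have htop := Hist.coalitionTop_eq_of_agentTop_eq hanc
  have h₁ := hG.rd_last_coalitionTop A hh
  have h₂ := hG.rd_last_coalitionTop A hh'
  rw [htop] at h₁
  exact (hG.1 A).trans ((hG.1 A).symm h₁) h₂

variable (G)

def unravel : CMAES Agent where
  State := {h : Hist Agent G.State // G.IsPath h}
  state_nonempty := G.state_nonempty.map fun s => ⟨.base s, trivial⟩
  RD A h h' := ∀ a ∈ A.1, h.1.agentTop a = h'.1.agentTop a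
  RC A := Relation.ReflTransGen
    fun h h' => ∃ A' : Coalition Agent, A'.1 ⊆ A.1 ∧ ∀ a ∈ A'.1, h.1.agentTop a = h'.1.agentTop a
  RC_eq _ := rfl

lemma unravel_isFrame : G.unravel.IsFrame := by
  refine ⟨fun A => ⟨fun _ _ _ => rfl, fun h a ha => (h a ha).symm,
    fun h h' a ha => (h a ha).trans (h' a ha)⟩, fun A h h' => ⟨?_, ?_⟩⟩
  · rintro hh' a ha b rfl
    exact hh' b ha
  · exact fun hh' a ha => hh' a ha a rfl

variable {G}

def unravel.extend (h : G.unravel.State) (A : Coalition Agent) (t : G.State)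
    (ht : G.RD A h.1.last t) : G.unravel.State :=
  ⟨.step h.1 A t, h.2, ht⟩

lemma unravel.rd_extend (h : G.unravel.State) (A : Coalition Agent) (t : G.State)
    (ht : G.RD A h.1.last t) : G.unravel.RD A h (extend h A t ht) := fun _ ha =>
  (Hist.agentTop_step_of_mem h.1 t ha).symm

lemma IsPseudoFrame.rd_last_of_unravel_rd (hG : G.IsPseudoFrame) {A : Coalition Agent}
    {h h' : G.unravel.State} (hhh' : G.unravel.RD A h h') : G.RD A h.1.last h'.1.last :=
  hG.rd_last_of_agentTop_eq h.2 h'.2 hhh'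

lemma IsPseudoFrame.rc_last_of_unravel_rc (hG : G.IsPseudoFrame) {A : Coalition Agent}
    {h h' : G.unravel.State} (hhh' : G.unravel.RC A h h') : G.RC A h.1.last h'.1.last := by
  rw [G.RC_eq]
  induction hhh' with
  | refl => exact .refl
  | tail _ hstep ih =>
    obtain ⟨A', hA', hrd⟩ := hstep
    exact ih.tail ⟨A', hA', hG.rd_last_of_unravel_rd hrd⟩

lemma exists_unravel_rc_of_rc {A : Coalition Agent} {h : G.unravel.State} {t : G.State}
    (ht : G.RC A h.1.last t) : ∃ h', G.unravel.RC A h h' ∧ h'.1.last = t := by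
  rw [G.RC_eq] at ht
  induction ht with
  | refl => exact ⟨h, .refl, rfl⟩
  | tail _ hstep ih =>
    obtain ⟨g, hhg, rfl⟩ := ih
    obtain ⟨A', hA', hrd⟩ := hstep
    exact ⟨unravel.extend g A' _ hrd, hhg.tail ⟨A', hA', unravel.rd_extend g A' _ hrd⟩, rfl⟩

end CMAES

namespace CMAEModel

variable {Agent AP : Type} (M : CMAEModel Agent AP)

def unravel : CMAEModel Agent AP :=
  { M.toCMAES.unravel with label := fun h => M.label h.1.last }

lemma unravel_isGenuine : M.unravel.IsGenuine :=
  M.toCMAES.unravel_isFrame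

variable {M}

lemma sat_unravel_iff (hM : M.IsPseudo) (φ : Formula Agent AP) (h : M.unravel.State) :
    M.unravel.Sat φ h ↔ M.Sat φ h.1.last := by
  induction φ generalizing h with
  | atom p => exact Iff.rfl
  | neg φ ih => exact not_congr (ih h)
  | and φ ψ ihφ ihψ => exact and_congr (ihφ h) (ihψ h)
  | D A φ ih =>
    refine ⟨fun hφ t ht => ?_, fun hφ h' hh' => (ih h').mpr (hφ _ (hM.rd_last_of_unravel_rd hh'))⟩
    exact (ih _).mp (hφ _ (CMAES.unravel.rd_extend h A t ht))
  | C A φ ih =>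
    refine ⟨fun hφ t ht => ?_, fun hφ h' hh' => (ih h').mpr (hφ _ (hM.rc_last_of_unravel_rc hh'))⟩
    obtain ⟨h', hh', rfl⟩ := CMAES.exists_unravel_rc_of_rc ht
    exact (ih h').mp (hφ h' hh')

end CMAEModel

theorem cmaem_sat_iff_pseudo_sat_general {Agent AP : Type}
    (θ : Formula Agent AP) :
    SatisfiableInCMAEM Agent AP θ ↔ SatisfiableInPseudo Agent AP θ := by
  constructor
  · rintro ⟨M, hM, s, hs⟩
    exact ⟨M, hM.isPseudoFrame, s, hs⟩
  · rintro ⟨M, hM, s, hs⟩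
    exact ⟨M.unravel, M.unravel_isGenuine, ⟨.base s, trivial⟩, (M.sat_unravel_iff hM θ _).mpr hs⟩

/-- `θ` is satisfiable in a CMAEM iff `θ` is satisfiable in a
pseudo-CMAEM. -/
theorem cmaem_sat_iff_pseudo_sat {Agent AP : Type} [Fintype Agent] [Nonempty Agent]
    (θ : Formula Agent AP) :
    SatisfiableInCMAEM Agent AP θ ↔ SatisfiableInPseudo Agent AP θ :=
  cmaem_sat_iff_pseudo_sat_general θ
end
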